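/- arXiv:0803.2058 — 5 statements merged into one kernel-verified Lean document; each statement's English description precedes it below -/
import Mathlib

section
/- For holomorphic maps φ, ψ : 𝔻 → 𝔻 (open unit disc), a constant C ∈ [0,1), and unimodular constants ω₁, ω₂, the map f(λ) = (ω₁(φ(λ)+C)/(1+C), ω₂ψ(λ)(1+Cφ(λ))/(1+C), ω₁ω₂φ(λ)ψ(λ)) maps 𝔻 into the tetrablock 𝔼. -/
/-!
The rotation `(z₁, z₂, z₃) ↦ (ω₁ z₁, ω₂ z₂, ω₁ ω₂ z₃)` by unimodular constants preserves the
three quantities in the definition of `𝔼`, so one may take `ω₁ = ω₂ = 1`. For `a, b ∈ 𝔻` and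
`z = ((a + C)/(1 + C), b(1 + C a)/(1 + C), a b)` one computes
`(1 + C)(z₁ - z̄₂ z₃) = a (1 - |b|²) + C (1 - |a|²|b|²)` and `(1 + C)(z₂ - z̄₁ z₃) = b (1 - |a|²)`.
With `x = |a|`, `y = |b|` the defining inequality of `𝔼` then reduces, after clearing `1 + C`,
to `0 < (1 - x)(1 - y)(1 - x y)`.
-/

open Complex Metric

/-- The tetrablock 𝔼 ⊂ ℂ³. -/
def tetrablock : Set (ℂ × ℂ × ℂ) :=
  {z | ‖z.1 - (starRingEnd ℂ) z.2.1 * z.2.2‖ +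
       ‖z.2.1 - (starRingEnd ℂ) z.1 * z.2.2‖ +
       (‖z.2.2‖) ^ 2 < 1}

theorem rotate_mem_tetrablock {ω₁ ω₂ : ℂ} (hω₁ : ‖ω₁‖ = 1) (hω₂ : ‖ω₂‖ = 1)
    {z : ℂ × ℂ × ℂ} (hz : z ∈ tetrablock) :
    (ω₁ * z.1, ω₂ * z.2.1, ω₁ * ω₂ * z.2.2) ∈ tetrablock := by
  have hω₁' : (starRingEnd ℂ) ω₁ * ω₁ = 1 := by simp [conj_mul', hω₁]
  have hω₂' : (starRingEnd ℂ) ω₂ * ω₂ = 1 := by simp [conj_mul', hω₂]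
  have h₁ : ω₁ * z.1 - (starRingEnd ℂ) (ω₂ * z.2.1) * (ω₁ * ω₂ * z.2.2)
      = ω₁ * (z.1 - (starRingEnd ℂ) z.2.1 * z.2.2) := by
    rw [map_mul]; linear_combination (-ω₁ * (starRingEnd ℂ) z.2.1 * z.2.2) * hω₂'
  have h₂ : ω₂ * z.2.1 - (starRingEnd ℂ) (ω₁ * z.1) * (ω₁ * ω₂ * z.2.2)
      = ω₂ * (z.2.1 - (starRingEnd ℂ) z.1 * z.2.2) := by
    rw [map_mul]; linear_combination (-ω₂ * (starRingEnd ℂ) z.1 * z.2.2) * hω₁'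
  change ‖_‖ + ‖_‖ + ‖_‖ ^ 2 < 1
  rw [h₁, h₂, norm_mul, norm_mul, norm_mul, norm_mul, hω₁, hω₂]
  simp only [one_mul, mul_one]
  exact hz

theorem mem_tetrablock_of_norm_lt_one {a b : ℂ} (ha : ‖a‖ < 1) (hb : ‖b‖ < 1) {C : ℝ}
    (hC : 0 ≤ C) :
    ((a + C) / (1 + C), b * (1 + C * a) / (1 + C), a * b) ∈ tetrablock := by
  have hC' : (1 + C : ℂ) ≠ 0 := by exact_mod_cast (by positivity : (1 + C : ℝ) ≠ 0)
  have haa := conj_mul' a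
  have hbb := conj_mul' b
  have h₁ : (a + C) / (1 + C) - (starRingEnd ℂ) (b * (1 + C * a) / (1 + C)) * (a * b)
      = (a * (1 - ‖b‖ ^ 2 : ℝ) + C * (1 - ‖a‖ ^ 2 * ‖b‖ ^ 2 : ℝ)) / (1 + C) := by
    simp only [map_mul, map_div₀, map_add, map_one, conj_ofReal]
    field_simp
    push_cast
    linear_combination (- a * (1 + C * (starRingEnd ℂ) a)) * hbb + (- C * ‖b‖ ^ 2) * haa
  have h₂ : b * (1 + C * a) / (1 + C) - (starRingEnd ℂ) ((a + C) / (1 + C)) * (a * b)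
      = (b * (1 - ‖a‖ ^ 2 : ℝ)) / (1 + C) := by
    simp only [map_div₀, map_add, map_one, conj_ofReal]
    field_simp
    push_cast
    linear_combination (- b) * haa
  have hnorm : ‖(1 + C : ℂ)‖ = 1 + C := by
    exact_mod_cast Complex.norm_of_nonneg (by positivity : (0:ℝ) ≤ 1 + C)
  have hx2 : 0 ≤ 1 - ‖a‖ ^ 2 := by nlinarith [norm_nonneg a]
  have hxy2 : 0 ≤ 1 - ‖a‖ ^ 2 * ‖b‖ ^ 2 := by nlinarith [norm_nonneg a, norm_nonneg b]
  have e₁ : ‖a * (1 - ‖b‖ ^ 2 : ℝ) + C * (1 - ‖a‖ ^ 2 * ‖b‖ ^ 2 : ℝ)‖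
      ≤ ‖a‖ * (1 - ‖b‖ ^ 2) + C * (1 - ‖a‖ ^ 2 * ‖b‖ ^ 2) := by
    refine (norm_add_le _ _).trans_eq ?_
    rw [norm_mul, norm_mul, Complex.norm_of_nonneg hC, Complex.norm_of_nonneg hxy2,
      Complex.norm_of_nonneg (by nlinarith [norm_nonneg b])]
  have hab : ‖a‖ * ‖b‖ < 1 := by nlinarith [norm_nonneg a, norm_nonneg b]
  have hpos : 0 < (1 - ‖a‖) * (1 - ‖b‖) * (1 - ‖a‖ * ‖b‖) := by
    apply mul_pos (mul_pos _ _) <;> linarith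
  change ‖_‖ + ‖_‖ + ‖_‖ ^ 2 < 1
  rw [h₁, h₂, norm_div, norm_div, hnorm, norm_mul, norm_mul, Complex.norm_of_nonneg hx2]
  calc _ ≤ (‖a‖ * (1 - ‖b‖ ^ 2) + C * (1 - ‖a‖ ^ 2 * ‖b‖ ^ 2)) / (1 + C)
        + ‖b‖ * (1 - ‖a‖ ^ 2) / (1 + C) + (‖a‖ * ‖b‖) ^ 2 := by gcongr
    _ < 1 := by
      rw [← add_div, div_add' _ _ _ (by positivity), div_lt_one (by positivity)]
      linear_combination hpos

theorem stmt0_general (φ ψ : ℂ → ℂ)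
    (hφm : ∀ l ∈ ball (0 : ℂ) 1, φ l ∈ ball (0 : ℂ) 1)
    (hψm : ∀ l ∈ ball (0 : ℂ) 1, ψ l ∈ ball (0 : ℂ) 1)
    (C : ℝ) (hC0 : 0 ≤ C)
    (ω₁ ω₂ : ℂ) (hω₁ : ‖ω₁‖ = 1) (hω₂ : ‖ω₂‖ = 1) :
    ∀ l ∈ ball (0 : ℂ) 1,
      (ω₁ * (φ l + C) / (1 + C),
       ω₂ * ψ l * (1 + C * φ l) / (1 + C),
       ω₁ * ω₂ * φ l * ψ l) ∈ tetrablock := by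
  intro l hl
  have h := rotate_mem_tetrablock hω₁ hω₂ <| mem_tetrablock_of_norm_lt_one
    (mem_ball_zero_iff.1 (hφm l hl)) (mem_ball_zero_iff.1 (hψm l hl)) hC0
  simpa only [mul_div_assoc, mul_assoc] using h

theorem stmt0 (φ ψ : ℂ → ℂ)
    (hφd : DifferentiableOn ℂ φ (ball (0 : ℂ) 1))
    (hψd : DifferentiableOn ℂ ψ (ball (0 : ℂ) 1))
    (hφm : ∀ l ∈ ball (0 : ℂ) 1, φ l ∈ ball (0 : ℂ) 1)
    (hψm : ∀ l ∈ ball (0 : ℂ) 1, ψ l ∈ ball (0 : ℂ) 1)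
    (C : ℝ) (hC0 : 0 ≤ C) (hC1 : C < 1)
    (ω₁ ω₂ : ℂ) (hω₁ : ‖ω₁‖ = 1) (hω₂ : ‖ω₂‖ = 1) :
    ∀ l ∈ ball (0 : ℂ) 1,
      (ω₁ * (φ l + C) / (1 + C),
       ω₂ * ψ l * (1 + C * φ l) / (1 + C),
       ω₁ * ω₂ * φ l * ψ l) ∈ tetrablock :=
  stmt0_general φ ψ hφm hψm C hC0 ω₁ ω₂ hω₁ hω₂
end

section
/- For any z₁, z₂, z₃ ∈ ℂ with |z₁ - conj(z₂)z₃| + |z₂ - conj(z₁)z₃| + |z₃|² < 1, one has |z₁| < 1, |z₂| < 1, and |z₃| < 1. -/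
/-! Since `z₁ = (z₁ - z̄₂ z₃) + z̄₂ z₃`, we get `|z₁| ≤ a + |z₂| r` and symmetrically
`|z₂| ≤ b + |z₁| r`, where `a, b` are the two moduli in the definition and `r = |z₃| < 1`.
Substituting the second bound into the first gives `(1 - r²) |z₁| ≤ a + r b ≤ a + b < 1 - r²`. -/

open Complex ComplexConjugate

theorem norm_le_norm_sub_star_mul_add_mul {A : Type*} [NormedRing A] [StarRing A]
    [NormedStarGroup A] (a b c : A) : ‖a‖ ≤ ‖a - star b * c‖ + ‖b‖ * ‖c‖ :=
  calc ‖a‖ = ‖(a - star b * c) + star b * c‖ := by rw [sub_add_cancel]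
    _ ≤ ‖a - star b * c‖ + ‖star b‖ * ‖c‖ := norm_add_le_of_le le_rfl (norm_mul_le _ _)
    _ = ‖a - star b * c‖ + ‖b‖ * ‖c‖ := by rw [norm_star]

section Tetrablock

variable {z₁ z₂ z₃ : ℂ}

theorem tetrablock_norm_thd_lt_one
    (h : ‖z₁ - conj z₂ * z₃‖ + ‖z₂ - conj z₁ * z₃‖ + ‖z₃‖ ^ 2 < 1) : ‖z₃‖ < 1 :=
  (pow_lt_one_iff_of_nonneg (norm_nonneg z₃) two_ne_zero).1 <| by
    linarith [norm_nonneg (z₁ - conj z₂ * z₃), norm_nonneg (z₂ - conj z₁ * z₃)]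

theorem tetrablock_norm_fst_lt_one
    (h : ‖z₁ - conj z₂ * z₃‖ + ‖z₂ - conj z₁ * z₃‖ + ‖z₃‖ ^ 2 < 1) : ‖z₁‖ < 1 := by
  set a := ‖z₁ - conj z₂ * z₃‖
  set b := ‖z₂ - conj z₁ * z₃‖
  set r := ‖z₃‖
  have hr : r < 1 := tetrablock_norm_thd_lt_one h
  have h₁ : ‖z₁‖ ≤ a + ‖z₂‖ * r := norm_le_norm_sub_star_mul_add_mul z₁ z₂ z₃
  have h₂ : ‖z₂‖ ≤ b + ‖z₁‖ * r := norm_le_norm_sub_star_mul_add_mul z₂ z₁ z₃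
  have hsubst : (1 - r ^ 2) * ‖z₁‖ ≤ a + r * b := by
    nlinarith [mul_le_mul_of_nonneg_left h₂ (norm_nonneg z₃)]
  have hab : a + r * b < 1 - r ^ 2 := by nlinarith [norm_nonneg (z₂ - conj z₁ * z₃)]
  have hpos : 0 < 1 - r ^ 2 := by nlinarith [norm_nonneg z₃]
  exact lt_of_mul_lt_mul_left (by linarith) hpos.le

end Tetrablock

theorem stmt1 (z₁ z₂ z₃ : ℂ)
    (h : ‖z₁ - (starRingEnd ℂ) z₂ * z₃‖ +
         ‖z₂ - (starRingEnd ℂ) z₁ * z₃‖ +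
         ‖z₃‖ ^ 2 < 1) :
    ‖z₁‖ < 1 ∧ ‖z₂‖ < 1 ∧ ‖z₃‖ < 1 :=
  ⟨tetrablock_norm_fst_lt_one h, tetrablock_norm_fst_lt_one (by linarith),
    tetrablock_norm_thd_lt_one h⟩
end

section
/- Let f : 𝔻 → ℂ with |f(λ)| ≤ 1 for all λ ∈ 𝔻 be holomorphic, φ : 𝔻 → 𝔻 holomorphic, C ∈ [0,1), and let f₁(λ) = (φ(λ)+C)/(1+C), f₂(λ) = f(λ)(1+Cφ(λ))/(1+C), f₃(λ) = φ(λ)f(λ). Then |f₁(λ) - conj(f₂(λ))f₃(λ)| ≤ (|φ(λ)|(1-|f(λ)|²) + C(1-|φ(λ)|²|f(λ)|²))/(1+C) for all λ ∈ 𝔻. -/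
open Complex Metric

/-- The cross term collapses because `conj b * b = ‖b‖ ^ 2` and `conj a * a = ‖a‖ ^ 2`. -/
theorem add_ofReal_sub_conj_mul_eq (a b : ℂ) (C : ℝ) :
    a + C - starRingEnd ℂ (b * (1 + C * a)) * (a * b)
      = a * ((1 - ‖b‖ ^ 2 : ℝ) : ℂ) + ((C * (1 - ‖a‖ ^ 2 * ‖b‖ ^ 2) : ℝ) : ℂ) := by
  have hb := conj_mul' b
  have ha := conj_mul' a
  simp only [map_mul, map_add, map_one, conj_ofReal]
  push_cast
  linear_combination (-a - C * a * starRingEnd ℂ a) * hb - C * (‖b‖ : ℂ) ^ 2 * ha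

theorem norm_mul_ofReal_add_ofReal_le (a : ℂ) {r s : ℝ} (hr : 0 ≤ r) (hs : 0 ≤ s) :
    ‖a * r + s‖ ≤ ‖a‖ * r + s := by
  calc ‖a * r + s‖ ≤ ‖a * r‖ + ‖(s : ℂ)‖ := norm_add_le _ _
    _ = ‖a‖ * r + s := by rw [norm_mul, norm_real, norm_real, Real.norm_of_nonneg hr,
        Real.norm_of_nonneg hs]

theorem norm_add_ofReal_div_sub_conj_mul_le {a b : ℂ} (ha : ‖a‖ ≤ 1) (hb : ‖b‖ ≤ 1)
    {C : ℝ} (hC : 0 ≤ C) :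
    ‖(a + C) / (1 + C) - starRingEnd ℂ (b * (1 + C * a) / (1 + C)) * (a * b)‖
      ≤ (‖a‖ * (1 - ‖b‖ ^ 2) + C * (1 - ‖a‖ ^ 2 * ‖b‖ ^ 2)) / (1 + C) := by
  have hC1 : (0 : ℝ) < 1 + C := by linarith
  have hb2 : 0 ≤ 1 - ‖b‖ ^ 2 := by nlinarith [norm_nonneg b]
  have hab2 : 0 ≤ 1 - ‖a‖ ^ 2 * ‖b‖ ^ 2 := by nlinarith [norm_nonneg a, norm_nonneg b]
  have hdiv : (a + C) / (1 + C) - starRingEnd ℂ (b * (1 + C * a) / (1 + C)) * (a * b)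
      = (a + C - starRingEnd ℂ (b * (1 + C * a)) * (a * b)) / ((1 + C : ℝ) : ℂ) := by
    rw [map_div₀, show (1 + (C : ℂ)) = ((1 + C : ℝ) : ℂ) by push_cast; rfl, conj_ofReal]
    ring
  rw [hdiv, norm_div, norm_real, Real.norm_of_nonneg hC1.le, add_ofReal_sub_conj_mul_eq]
  gcongr
  exact norm_mul_ofReal_add_ofReal_le a hb2 (mul_nonneg hC hab2)

theorem stmt6_general (f φ : ℂ → ℂ)
    (hfb : ∀ l ∈ ball (0 : ℂ) 1, ‖f l‖ ≤ 1)
    (hφm : ∀ l ∈ ball (0 : ℂ) 1, φ l ∈ ball (0 : ℂ) 1)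
    (C : ℝ) (hC0 : 0 ≤ C) :
    ∀ l ∈ ball (0 : ℂ) 1,
      ‖(φ l + C) / (1 + C)
          - (starRingEnd ℂ) (f l * (1 + C * φ l) / (1 + C)) * (φ l * f l)‖
        ≤ (‖φ l‖ * (1 - (‖f l‖) ^ 2)
            + C * (1 - (‖φ l‖) ^ 2 * (‖f l‖) ^ 2)) / (1 + C) := by
  intro l hl
  have hφl : ‖φ l‖ ≤ 1 := (mem_ball_zero_iff.mp (hφm l hl)).le
  exact norm_add_ofReal_div_sub_conj_mul_le hφl (hfb l hl) hC0

theorem stmt6 (f φ : ℂ → ℂ)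
    (hfd : DifferentiableOn ℂ f (ball (0 : ℂ) 1))
    (hfb : ∀ l ∈ ball (0 : ℂ) 1, ‖f l‖ ≤ 1)
    (hφd : DifferentiableOn ℂ φ (ball (0 : ℂ) 1))
    (hφm : ∀ l ∈ ball (0 : ℂ) 1, φ l ∈ ball (0 : ℂ) 1)
    (C : ℝ) (hC0 : 0 ≤ C) (hC1 : C < 1) :
    ∀ l ∈ ball (0 : ℂ) 1,
      ‖(φ l + C) / (1 + C)
          - (starRingEnd ℂ) (f l * (1 + C * φ l) / (1 + C)) * (φ l * f l)‖
        ≤ (‖φ l‖ * (1 - (‖f l‖) ^ 2)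
            + C * (1 - (‖φ l‖) ^ 2 * (‖f l‖) ^ 2)) / (1 + C) :=
  stmt6_general f φ hfb hφm C hC0
end

section
/- A point z = (z₁,z₂,z₃) ∈ ℂ³ with |z₁| < 1 lies in the closed region {|z₁ - conj(z₂)z₃| + |z₂ - conj(z₁)z₃| + |z₃|² < 1} whenever for all η in the closed unit disc, |(ηz₃ - z₂)/(ηz₁ - 1)| < 1 together with suitable uniformity; conversely, if z lies in the tetrablock 𝔼 then |(ηz₃ - z₂)/(ηz₁ - 1)| < 1 for every η in the closed unit disc. -/
/-!
Write `a = z₁ - z̄₂ z₃`, `b = z₂ - z̄₁ z₃`, `u = 1 - |z₃|²`, so that `|a| + |b| < u` on the tetrablock.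
The inequality `|η z₃ - z₂| < |η z₁ - 1|` is equivalent to the positivity of
`1 - |z₂|² + |η|² (|z₁|² - |z₃|²) - 2 Re (η a)`. Eliminating `|z₂|²` through
`|a|² - |b|² = (|z₁|² - |z₂|²) u` and bounding `|z₁| u ≤ |a| + |b| |z₃|` (from `z₁ u = a + b̄ z₃`)
reduces this to a real quadratic in `r = |η|`, which is positive on `[0, 1]` because its
Bernstein coefficients are.
-/

open Complex

open scoped ComplexConjugate

lemma sq_norm_sub_conj_mul_sub_sq_norm (z₁ z₂ z₃ : ℂ) :
    ‖z₁ - conj z₂ * z₃‖ ^ 2 - ‖z₂ - conj z₁ * z₃‖ ^ 2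
      = (‖z₁‖ ^ 2 - ‖z₂‖ ^ 2) * (1 - ‖z₃‖ ^ 2) := by
  simp only [Complex.sq_norm, normSq_apply, sub_re, sub_im, mul_re, mul_im, conj_re, conj_im]
  ring

lemma mul_one_sub_normSq_eq (z₁ z₂ z₃ : ℂ) :
    z₁ * (1 - normSq z₃) = (z₁ - conj z₂ * z₃) + conj (z₂ - conj z₁ * z₃) * z₃ := by
  rw [normSq_eq_conj_mul_self, map_sub, map_mul, conj_conj]
  ring

lemma norm_mul_one_sub_sq_norm_le (z₁ z₂ z₃ : ℂ) :
    ‖z₁‖ * (1 - ‖z₃‖ ^ 2) ≤ ‖z₁ - conj z₂ * z₃‖ + ‖z₂ - conj z₁ * z₃‖ * ‖z₃‖ :=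
  calc ‖z₁‖ * (1 - ‖z₃‖ ^ 2) ≤ ‖z₁‖ * |1 - ‖z₃‖ ^ 2| :=
        mul_le_mul_of_nonneg_left (le_abs_self _) (norm_nonneg _)
    _ = ‖z₁ * (1 - normSq z₃)‖ := by
        rw [norm_mul, ← Complex.sq_norm, ← ofReal_one, ← ofReal_sub, norm_real, Real.norm_eq_abs]
    _ ≤ ‖z₁ - conj z₂ * z₃‖ + ‖z₂ - conj z₁ * z₃‖ * ‖z₃‖ := by
        rw [mul_one_sub_normSq_eq]
        refine (norm_add_le _ _).trans_eq ?_
        rw [norm_mul, norm_conj]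

lemma sq_norm_mul_sub_one_sub_sq_norm (η z₁ z₂ z₃ : ℂ) :
    ‖η * z₁ - 1‖ ^ 2 - ‖η * z₃ - z₂‖ ^ 2
      = 1 - ‖z₂‖ ^ 2 + ‖η‖ ^ 2 * (‖z₁‖ ^ 2 - ‖z₃‖ ^ 2) - 2 * (η * (z₁ - conj z₂ * z₃)).re := by
  simp only [Complex.sq_norm, normSq_apply, sub_re, sub_im, mul_re, mul_im, conj_re, conj_im,
    one_re, one_im]
  ring

lemma tetrablock_bernstein_pos {A B t r : ℝ} (hA : 0 ≤ A) (hB : 0 ≤ B) (ht : 0 ≤ t)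
    (hr : 0 ≤ r) (hr1 : r ≤ 1) (hABt : A + B + t ^ 2 < 1) :
    0 < (1 - t ^ 2) * ((A - (1 - t ^ 2) * r) ^ 2 - B ^ 2)
      + (1 - r ^ 2) * ((1 - t ^ 2) ^ 2 - (A + B * t) ^ 2) := by
  set u := 1 - t ^ 2 with hu
  have hAB : A + B < u := by linarith
  have ht1 : t ≤ 1 := by nlinarith
  have hAtB : A * t + B < u := by nlinarith
  have hAtB0 : 0 ≤ A * t + B := by positivity
  have hα : 0 < u ^ 2 - (A * t + B) ^ 2 := by
    rw [sq_sub_sq]; exact mul_pos (by linarith) (by linarith)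
  have hβ : 0 ≤ u ^ 2 * (1 - A) - (A * t + B) ^ 2 := by
    have h_sq : (A * t + B) ^ 2 ≤ (u - A * (1 - t)) ^ 2 :=
      pow_le_pow_left₀ hAtB0 (by linarith) 2
    have h_gap : u ^ 2 * (1 - A) - (u - A * (1 - t)) ^ 2 = A * (1 - t) ^ 2 * (u - A) := by
      rw [hu]; ring
    have : 0 ≤ A * (1 - t) ^ 2 * (u - A) := mul_nonneg (by positivity) (by linarith)
    linarith
  have hγ : 0 < u * ((u - A) ^ 2 - B ^ 2) := by
    rw [sq_sub_sq]; exact mul_pos (by nlinarith) (mul_pos (by linarith) (by linarith))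
  have h_bernstein : u * ((A - u * r) ^ 2 - B ^ 2) + (1 - r ^ 2) * (u ^ 2 - (A + B * t) ^ 2)
      = (1 - r) ^ 2 * (u ^ 2 - (A * t + B) ^ 2)
        + 2 * r * (1 - r) * (u ^ 2 * (1 - A) - (A * t + B) ^ 2)
        + r ^ 2 * (u * ((u - A) ^ 2 - B ^ 2)) := by
    rw [hu]; ring
  rw [h_bernstein]
  have h_mid := mul_nonneg (mul_nonneg hr (sub_nonneg.2 hr1)) hβ
  rcases hr.eq_or_lt with rfl | hr0
  · nlinarith
  · nlinarith [mul_pos (pow_pos hr0 2) hγ, mul_nonneg (sq_nonneg (1 - r)) hα.le]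

lemma tetrablock_quadratic_pos {A B t s p r : ℝ} (hA : 0 ≤ A) (hB : 0 ≤ B) (ht : 0 ≤ t)
    (hs : 0 ≤ s) (hr : 0 ≤ r) (hr1 : r ≤ 1) (hABt : A + B + t ^ 2 < 1)
    (h_diff : A ^ 2 - B ^ 2 = (s ^ 2 - p ^ 2) * (1 - t ^ 2))
    (h_s : s * (1 - t ^ 2) ≤ A + B * t) :
    0 < 1 - p ^ 2 - 2 * r * A + r ^ 2 * (s ^ 2 - t ^ 2) := by
  have hu : 0 < 1 - t ^ 2 := by nlinarith
  have h_s_sq : (s * (1 - t ^ 2)) ^ 2 ≤ (A + B * t) ^ 2 :=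
    pow_le_pow_left₀ (by positivity) h_s 2
  have h_r_sq : 0 ≤ 1 - r ^ 2 := by nlinarith
  have h_G := tetrablock_bernstein_pos hA hB ht hr hr1 hABt
  refine pos_of_mul_pos_right (a := (1 - t ^ 2) ^ 2) ?_ (by positivity)
  nlinarith [mul_le_mul_of_nonneg_left h_s_sq h_r_sq]

theorem stmt9 (z : ℂ × ℂ × ℂ) (hz : z ∈ tetrablock) :
    ∀ η : ℂ, ‖η‖ ≤ 1 →
      ‖(η * z.2.2 - z.2.1) / (η * z.1 - 1)‖ < 1 := by
  obtain ⟨z₁, z₂, z₃⟩ := z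
  intro η hη
  have h_re : (η * (z₁ - conj z₂ * z₃)).re ≤ ‖η‖ * ‖z₁ - conj z₂ * z₃‖ :=
    (re_le_norm _).trans (norm_mul _ _).le
  have h_sq : ‖η * z₃ - z₂‖ ^ 2 < ‖η * z₁ - 1‖ ^ 2 := by
    rw [← sub_pos, sq_norm_mul_sub_one_sub_sq_norm]
    have := tetrablock_quadratic_pos (p := ‖z₂‖) (norm_nonneg _) (norm_nonneg _) (norm_nonneg _)
      (norm_nonneg z₁) (norm_nonneg η) hη hz (sq_norm_sub_conj_mul_sub_sq_norm z₁ z₂ z₃)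
      (norm_mul_one_sub_sq_norm_le z₁ z₂ z₃)
    linarith
  have h_lt := lt_of_pow_lt_pow_left₀ 2 (norm_nonneg _) h_sq
  rw [norm_div, div_lt_one ((norm_nonneg _).trans_lt h_lt)]
  exact h_lt
end

section
/- Suppose f = (f₁, f₂) : 𝔻 → ℂ² is holomorphic with f(0) = (0,0), ω is unimodular, F(z₁,z₂) = (2ωz₂ - z₁)/(2 - ωz₁), F ∘ f = id on 𝔻, and there is C ∈ ℝ with ((-2 + 2ω²f₂(λ))/(2 - ωf₁(λ))²)·f₁(λ) + (4ω/(2 - ωf₁(λ)))·f₂(λ) = Cλ for all λ ∈ 𝔻. Then f₁(λ) = 2(2-C)λ/(ωλ(1-C) - 1) and f₂(λ) = λ(λ - conj(ω)(1-C))/(1 - λω(1-C)) for all λ ∈ 𝔻, and moreover C ∈ [1,2]. -/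
open Complex Metric

/-!
Clearing denominators in `F ∘ f = id` gives `2ωf₂ = f₁(1 - λω) + 2λ`; substituting this into the
second identity leaves the linear relation `(ωλ(1 - C) - 1) f₁(λ) = 2(2 - C)λ`, from which both
formulas follow as soon as the coefficient of `f₁(λ)` cannot vanish. Along the diameter `λ = t ω̄`
the relation and `|f₁| < 2` give `|2 - C| |t| ≤ |1 - t(1 - C)|` for `-1 < t < 1`: at
`t = -1/(C - 1)` this forces `C ≤ 2`, and in the limit `t = 1` it gives `C ≥ 1`.
-/

section Pointwise

variable {ω x y l c : ℂ}

lemma two_sub_mul_ne_zero (hω : ‖ω‖ = 1) (hx : ‖x‖ < 2) : 2 - ω * x ≠ 0 := by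
  intro h
  have h2 := congrArg norm (sub_eq_zero.mp h)
  rw [norm_mul, hω, one_mul, Complex.norm_two] at h2
  linarith

lemma geodesic_relation_snd (hx : 2 - ω * x ≠ 0) (hF : (2 * ω * y - x) / (2 - ω * x) = l) :
    2 * ω * y = x * (1 - l * ω) + 2 * l := by
  rw [div_eq_iff hx] at hF
  linear_combination hF

lemma geodesic_relation_fst (hx : 2 - ω * x ≠ 0) (hsnd : 2 * ω * y = x * (1 - l * ω) + 2 * l)
    (hc : ((-2 + 2 * ω ^ 2 * y) / (2 - ω * x) ^ 2) * x + (4 * ω / (2 - ω * x)) * y = c * l) :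
    (ω * l * (1 - c) - 1) * x = 2 * (2 - c) * l := by
  field_simp at hc
  have hx' : ω * x - 2 ≠ 0 := fun h => hx (by linear_combination -h)
  refine mul_left_cancel₀ (mul_ne_zero hx' hx) ?_
  linear_combination (2 - ω * x) * hc - (4 - ω * x) * (2 - ω * x) * hsnd

lemma geodesic_formulas {C : ℝ} (hω : ‖ω‖ = 1) (hl : ‖l‖ < 1) (hC : C ∈ Set.Icc (1 : ℝ) 2)
    (hsnd : 2 * ω * y = x * (1 - l * ω) + 2 * l)
    (hfst : (ω * l * (1 - C) - 1) * x = 2 * (2 - C) * l) :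
    x = 2 * (2 - C) * l / (ω * l * (1 - C) - 1) ∧
      y = l * (l - (starRingEnd ℂ) ω * (1 - C)) / (1 - l * ω * (1 - C)) := by
  have hnorm : ‖ω * l * (1 - (C : ℂ))‖ < 1 := by
    rw [norm_mul, norm_mul, hω, one_mul, ← ofReal_one, ← ofReal_sub, norm_real, Real.norm_eq_abs,
      abs_of_nonpos (by linarith [hC.1])]
    nlinarith [norm_nonneg l, hC.2]
  have hd : ω * l * (1 - (C : ℂ)) - 1 ≠ 0 :=
    sub_ne_zero.mpr fun h => by rw [h, norm_one] at hnorm; exact lt_irrefl _ hnorm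
  have hd' : 1 - l * ω * (1 - (C : ℂ)) ≠ 0 := fun h => hd (by linear_combination -h)
  have hω0 : (2 : ℂ) * ω ≠ 0 := mul_ne_zero two_ne_zero (norm_ne_zero_iff.mp (by simp [hω]))
  have hωc : ω * (starRingEnd ℂ) ω = 1 := by simp [mul_conj', hω]
  refine ⟨(eq_div_iff hd).mpr (by linear_combination hfst), (eq_div_iff hd').mpr ?_⟩
  refine mul_left_cancel₀ hω0 ?_
  linear_combination (1 - l * ω * (1 - (C : ℂ))) * hsnd - (1 - l * ω) * hfst
    + 2 * l * (1 - (C : ℂ)) * hωc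

end Pointwise

lemma abs_mul_le_of_geodesic_relation {ω : ℂ} (hω : ‖ω‖ = 1) {C : ℝ} {g : ℂ → ℂ}
    (hg : ∀ l ∈ ball (0 : ℂ) 1, ‖g l‖ < 2)
    (hrel : ∀ l ∈ ball (0 : ℂ) 1, (ω * l * (1 - C) - 1) * g l = 2 * (2 - C) * l) :
    ∀ t ∈ Set.Ioo (-1 : ℝ) 1, |2 - C| * |t| ≤ |1 - t * (1 - C)| := by
  intro t ht
  have hl : (t : ℂ) * (starRingEnd ℂ) ω ∈ ball (0 : ℂ) 1 := by
    rw [mem_ball_zero_iff, norm_mul, norm_conj, hω, mul_one, norm_real, Real.norm_eq_abs]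
    exact abs_lt.mpr ht
  have hωc : ω * (starRingEnd ℂ) ω = 1 := by simp [mul_conj', hω]
  have hrel_t : ((t * (1 - C) - 1 : ℝ) : ℂ) * g (t * (starRingEnd ℂ) ω)
      = ((2 * (2 - C) * t : ℝ) : ℂ) * (starRingEnd ℂ) ω := by
    push_cast
    linear_combination hrel _ hl - (1 - C : ℂ) * t * g (t * (starRingEnd ℂ) ω) * hωc
  have hnorm := congrArg norm hrel_t
  simp only [norm_mul, norm_real, Real.norm_eq_abs, norm_conj, hω, mul_one, abs_two,
    abs_sub_comm _ (1 : ℝ)] at hnorm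
  have := mul_le_mul_of_nonneg_left (hg _ hl).le (abs_nonneg (1 - t * (1 - C)))
  linarith

lemma mem_Icc_one_two_of_forall_abs_mul_le {C : ℝ}
    (h : ∀ t ∈ Set.Ioo (-1 : ℝ) 1, |2 - C| * |t| ≤ |1 - t * (1 - C)|) :
    C ∈ Set.Icc (1 : ℝ) 2 := by
  have h_le_two : C ≤ 2 := by
    by_contra! hC
    have ht : (1 - C)⁻¹ ∈ Set.Ioo (-1 : ℝ) 1 := by
      refine ⟨?_, (inv_lt_zero.mpr (by linarith)).trans one_pos⟩
      rw [lt_inv_of_neg (by norm_num) (by linarith)]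
      linarith
    have key := h _ ht
    rw [inv_mul_cancel₀ (by linarith), sub_self, abs_zero] at key
    have : 0 < |2 - C| * |(1 - C)⁻¹| :=
      mul_pos (abs_pos.mpr (by linarith)) (abs_pos.mpr (inv_ne_zero (by linarith)))
    linarith
  have h_closed : Set.Icc (-1 : ℝ) 1 ⊆ {t | |2 - C| * |t| ≤ |1 - t * (1 - C)|} := by
    rw [← closure_Ioo (by norm_num)]
    exact closure_minimal h (isClosed_le (by fun_prop) (by fun_prop))
  have h_one := h_closed (Set.right_mem_Icc.mpr (by norm_num))
  simp only [Set.mem_ofPred_eq, abs_one, mul_one, one_mul, sub_sub_cancel] at h_one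
  have := sq_le_sq.mpr h_one
  exact ⟨by nlinarith, h_le_two⟩

theorem stmt12_general (f₁ f₂ : ℂ → ℂ)
    (hG : ∀ l ∈ ball (0 : ℂ) 1, ∃ μ ∈ ball (0 : ℂ) 1, ∃ ν ∈ ball (0 : ℂ) 1,
      f₁ l = μ + ν ∧ f₂ l = μ * ν)
    (ω : ℂ) (hω : ‖ω‖ = 1)
    (hFf : ∀ l ∈ ball (0 : ℂ) 1, (2 * ω * f₂ l - f₁ l) / (2 - ω * f₁ l) = l)
    (C : ℝ)
    (hC : ∀ l ∈ ball (0 : ℂ) 1,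
      ((-2 + 2 * ω ^ 2 * f₂ l) / (2 - ω * f₁ l) ^ 2) * f₁ l
        + (4 * ω / (2 - ω * f₁ l)) * f₂ l = C * l) :
    (∀ l ∈ ball (0 : ℂ) 1,
      f₁ l = 2 * (2 - C) * l / (ω * l * (1 - C) - 1) ∧
      f₂ l = l * (l - (starRingEnd ℂ) ω * (1 - C)) / (1 - l * ω * (1 - C))) ∧
    C ∈ Set.Icc (1 : ℝ) 2 := by
  have hf₁_lt : ∀ l ∈ ball (0 : ℂ) 1, ‖f₁ l‖ < 2 := fun l hl => by
    obtain ⟨μ, hμ, ν, hν, h₁, -⟩ := hG l hl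
    rw [mem_ball_zero_iff] at hμ hν
    rw [h₁]
    linarith [norm_add_le μ ν]
  have hden : ∀ l ∈ ball (0 : ℂ) 1, 2 - ω * f₁ l ≠ 0 := fun l hl =>
    two_sub_mul_ne_zero hω (hf₁_lt l hl)
  have hsnd : ∀ l ∈ ball (0 : ℂ) 1, 2 * ω * f₂ l = f₁ l * (1 - l * ω) + 2 * l := fun l hl =>
    geodesic_relation_snd (hden l hl) (hFf l hl)
  have hfst : ∀ l ∈ ball (0 : ℂ) 1, (ω * l * (1 - C) - 1) * f₁ l = 2 * (2 - C) * l :=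
    fun l hl => geodesic_relation_fst (hden l hl) (hsnd l hl) (hC l hl)
  have hC_mem : C ∈ Set.Icc (1 : ℝ) 2 :=
    mem_Icc_one_two_of_forall_abs_mul_le (abs_mul_le_of_geodesic_relation hω hf₁_lt hfst)
  exact ⟨fun l hl => geodesic_formulas hω (mem_ball_zero_iff.mp hl) hC_mem (hsnd l hl)
    (hfst l hl), hC_mem⟩

theorem stmt12 (f₁ f₂ : ℂ → ℂ)
    (hf₁ : DifferentiableOn ℂ f₁ (ball (0 : ℂ) 1))
    (hf₂ : DifferentiableOn ℂ f₂ (ball (0 : ℂ) 1))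
    (hG : ∀ l ∈ ball (0 : ℂ) 1, ∃ μ ∈ ball (0 : ℂ) 1, ∃ ν ∈ ball (0 : ℂ) 1,
      f₁ l = μ + ν ∧ f₂ l = μ * ν)
    (hf0 : f₁ 0 = 0 ∧ f₂ 0 = 0)
    (ω : ℂ) (hω : ‖ω‖ = 1)
    (hFf : ∀ l ∈ ball (0 : ℂ) 1, (2 * ω * f₂ l - f₁ l) / (2 - ω * f₁ l) = l)
    (C : ℝ)
    (hC : ∀ l ∈ ball (0 : ℂ) 1,
      ((-2 + 2 * ω ^ 2 * f₂ l) / (2 - ω * f₁ l) ^ 2) * f₁ l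
        + (4 * ω / (2 - ω * f₁ l)) * f₂ l = C * l) :
    (∀ l ∈ ball (0 : ℂ) 1,
      f₁ l = 2 * (2 - C) * l / (ω * l * (1 - C) - 1) ∧
      f₂ l = l * (l - (starRingEnd ℂ) ω * (1 - C)) / (1 - l * ω * (1 - C))) ∧
    C ∈ Set.Icc (1 : ℝ) 2 :=
  stmt12_general f₁ f₂ hG ω hω hFf C hC
end
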